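/- Let a > b > 0, ε ∈ {+1,−1}, and let x ∈ ℝ⁹ be any point of the pendulum family 𝓛₁ (ε=+1) or 𝓛₂ (ε=−1), i.e. x has ω = (v,0,0), α = (εa,0,0), β = (0, b cos θ, −b sin θ) for some v,θ ∈ ℝ. Then the integrals satisfy K(x) = (H(x) + 2εa)² and G(x) = a² H(x) + εa(a² − b²). -/
import Mathlib

noncomputable section

/-- The energy integral `H = ω₁²+ω₂²+½ω₃²−α₁−β₂`. -/
def kovH (x : Fin 9 → ℝ) : ℝ := (x 0)^2 + (x 1)^2 + (x 2)^2 / 2 - x 3 - x 7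

/-- The Kovalevskaya-type integral `K = (ω₁²−ω₂²+α₁−β₂)² + (2ω₁ω₂+α₂+β₁)²`. -/
def kovK (x : Fin 9 → ℝ) : ℝ :=
  ((x 0)^2 - (x 1)^2 + x 3 - x 7)^2 + (2 * x 0 * x 1 + x 4 + x 6)^2

/-- The integral `G` of the Kovalevskaya top in a double field. -/
def kovG (a b : ℝ) (x : Fin 9 → ℝ) : ℝ :=
  (x 0 * x 3 + x 1 * x 4 + x 5 * x 2 / 2)^2
  + (x 0 * x 6 + x 1 * x 7 + x 8 * x 2 / 2)^2
  + x 2 * ((x 4 * x 8 - x 5 * x 7) * x 0 + (x 5 * x 6 - x 3 * x 8) * x 1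
      + (x 3 * x 7 - x 4 * x 6) * x 2 / 2)
  - x 3 * b^2 - x 7 * a^2

/-- on the pendulum families `𝓛₁` (ε=+1), `𝓛₂` (ε=−1) one has
`K = (H + 2εa)²` and `G = a²H + εa(a²−b²)`. -/
theorem integrals_on_L12 (a b : ℝ) (hb : 0 < b) (hab : b < a)
    (ε : ℝ) (hε : ε = 1 ∨ ε = -1) (v θ : ℝ)
    (x : Fin 9 → ℝ)
    (hx : x = ![v, 0, 0, ε * a, 0, 0, 0, b * Real.cos θ, -(b * Real.sin θ)]) :
    kovK x = (kovH x + 2 * ε * a)^2 ∧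
    kovG a b x = a^2 * kovH x + ε * a * (a^2 - b^2) := by
  subst hx
  have hε2 : ε^2 = 1 := by rcases hε with h | h <;> simp [h]
  have hs := Real.sin_sq_add_cos_sq θ
  have e0 : (![v, 0, 0, ε * a, 0, 0, 0, b * Real.cos θ, -(b * Real.sin θ)] : Fin 9 → ℝ) 0 = v := rfl
  have e1 : (![v, 0, 0, ε * a, 0, 0, 0, b * Real.cos θ, -(b * Real.sin θ)] : Fin 9 → ℝ) 1 = 0 := rfl
  have e2 : (![v, 0, 0, ε * a, 0, 0, 0, b * Real.cos θ, -(b * Real.sin θ)] : Fin 9 → ℝ) 2 = 0 := rfl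
  have e3 : (![v, 0, 0, ε * a, 0, 0, 0, b * Real.cos θ, -(b * Real.sin θ)] : Fin 9 → ℝ) 3 = ε * a := rfl
  have e4 : (![v, 0, 0, ε * a, 0, 0, 0, b * Real.cos θ, -(b * Real.sin θ)] : Fin 9 → ℝ) 4 = 0 := rfl
  have e5 : (![v, 0, 0, ε * a, 0, 0, 0, b * Real.cos θ, -(b * Real.sin θ)] : Fin 9 → ℝ) 5 = 0 := rfl
  have e6 : (![v, 0, 0, ε * a, 0, 0, 0, b * Real.cos θ, -(b * Real.sin θ)] : Fin 9 → ℝ) 6 = 0 := rfl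
  have e7 : (![v, 0, 0, ε * a, 0, 0, 0, b * Real.cos θ, -(b * Real.sin θ)] : Fin 9 → ℝ) 7 = b * Real.cos θ := rfl
  have e8 : (![v, 0, 0, ε * a, 0, 0, 0, b * Real.cos θ, -(b * Real.sin θ)] : Fin 9 → ℝ) 8 = -(b * Real.sin θ) := rfl
  constructor <;>
  · simp only [kovK, kovH, kovG, e0, e1, e2, e3, e4, e5, e6, e7, e8]
    nlinarith [hε2, hs, sq_nonneg v, sq_nonneg ε]
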